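/- arXiv:2009.08832 — 3 statements merged into one kernel-verified Lean document; each statement's English description precedes it below -/
import Mathlib

section
/- With Q = S_ψ ∘ O as in the Grover iteration acting as rotation by 2α in span{ψ₀, ψ₁}, for all k ∈ ℕ: Q^k(cos(a)·ψ₀ + sin(a)·ψ₁) = cos(a + 2kα)·ψ₀ + sin(a + 2kα)·ψ₁. -/
/-!
Write `u θ = angleVec ψ₀ ψ₁ θ = cos θ • ψ₀ + sin θ • ψ₁`. On this circle `O` is the reflection `u θ ↦ u (-θ)`,
and since `⟪u α, u β⟫ = cos (β - α)`, `S_ψ` is the reflection `u β ↦ u (2α - β)` about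
`ψ = u α`. Their composite `Q` is therefore the rotation `u θ ↦ u (θ + 2α)`, i.e. `u`
semiconjugates translation by `2α` to `Q`, and iterating gives the claim.
-/

open Real Set

section
variable {H : Type*} [NormedAddCommGroup H] [InnerProductSpace ℂ H]

theorem Submodule.orthogonalProjectionOnto_sub_orthogonal_add (K : Submodule ℂ H)
    [K.HasOrthogonalProjection] {x y : H} (hx : x ∈ K) (hy : y ∈ Kᗮ) :
    (K.orthogonalProjectionOnto (x + y) : H) - (Kᗮ.orthogonalProjectionOnto (x + y) : H)
      = x - y := by
  simp [K.starProjection_eq_self_iff.mpr hx, K.starProjection_apply_eq_zero_iff.mpr hy]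

noncomputable def angleVec (ψ₀ ψ₁ : H) (θ : ℝ) : H := cos θ • ψ₀ + sin θ • ψ₁

variable {ψ₀ ψ₁ : H}

theorem orthogonalProjectionOnto_sub_orthogonal_angleVec (K : Submodule ℂ H)
    [K.HasOrthogonalProjection] (hψ₀ : ψ₀ ∈ K) (hψ₁ : ψ₁ ∈ Kᗮ) (θ : ℝ) :
    (K.orthogonalProjectionOnto (angleVec ψ₀ ψ₁ θ) : H)
      - (Kᗮ.orthogonalProjectionOnto (angleVec ψ₀ ψ₁ θ) : H) = angleVec ψ₀ ψ₁ (-θ) := by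
  rw [angleVec, K.orthogonalProjectionOnto_sub_orthogonal_add (K.smul_of_tower_mem _ hψ₀)
    (Kᗮ.smul_of_tower_mem _ hψ₁), angleVec, cos_neg, sin_neg, neg_smul, sub_eq_add_neg]

theorem inner_angleVec (h01 : inner ℂ ψ₀ ψ₁ = 0) (h0 : ‖ψ₀‖ = 1) (h1 : ‖ψ₁‖ = 1) (α β : ℝ) :
    inner ℂ (angleVec ψ₀ ψ₁ α) (angleVec ψ₀ ψ₁ β) = (cos (β - α) : ℂ) := by
  have h10 : inner ℂ ψ₁ ψ₀ = 0 := inner_eq_zero_symm.mp h01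
  simp only [angleVec, ← Complex.coe_smul, inner_add_left, inner_add_right, inner_smul_left,
    inner_smul_right, h01, h10, inner_self_eq_one_of_norm_eq_one h0,
    inner_self_eq_one_of_norm_eq_one h1, cos_sub, Complex.conj_ofReal, Complex.ofReal_add,
    Complex.ofReal_mul]
  ring

theorem two_inner_smul_angleVec_sub_angleVec (h01 : inner ℂ ψ₀ ψ₁ = 0) (h0 : ‖ψ₀‖ = 1)
    (h1 : ‖ψ₁‖ = 1) (α β : ℝ) :
    (2 : ℂ) • (inner ℂ (angleVec ψ₀ ψ₁ α) (angleVec ψ₀ ψ₁ β) • angleVec ψ₀ ψ₁ α)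
      - angleVec ψ₀ ψ₁ β = angleVec ψ₀ ψ₁ (2 * α - β) := by
  have hcos : cos (2 * α - β) = 2 * cos (β - α) * cos α - cos β := by
    rw [show 2 * α - β = α - (β - α) by ring, cos_sub, cos_sub, sin_sub]
    linear_combination (-cos β) * sin_sq_add_cos_sq α
  have hsin : sin (2 * α - β) = 2 * cos (β - α) * sin α - sin β := by
    rw [show 2 * α - β = α - (β - α) by ring, sin_sub, cos_sub, sin_sub]
    linear_combination (-sin β) * sin_sq_add_cos_sq α
  rw [inner_angleVec h01 h0 h1, Complex.coe_smul]
  simp only [angleVec, hcos, hsin]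
  module

end

theorem stmt_15_general {H : Type*} [NormedAddCommGroup H] [InnerProductSpace ℂ H]
    [FiniteDimensional ℂ H]
    (K : Submodule ℂ H) (ψ₀ ψ₁ : H)
    (hψ₀ : ψ₀ ∈ K) (hψ₁ : ψ₁ ∈ Kᗮ) (h0 : ‖ψ₀‖ = 1) (h1 : ‖ψ₁‖ = 1)
    (α : ℝ) (a : ℝ) (k : ℕ) :
    let ψ : H := Real.cos α • ψ₀ + Real.sin α • ψ₁
    let O : H → H := fun x =>
      ((Submodule.orthogonalProjectionOnto K x : H) - (Submodule.orthogonalProjectionOnto Kᗮ x : H))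
    let S : H → H := fun x => (2 : ℂ) • ((inner ℂ ψ x : ℂ) • ψ) - x
    let Q : H → H := S ∘ O
    Q^[k] (Real.cos a • ψ₀ + Real.sin a • ψ₁)
      = Real.cos (a + 2 * k * α) • ψ₀ + Real.sin (a + 2 * k * α) • ψ₁ := by
  intro ψ O S Q
  have h01 : inner ℂ ψ₀ ψ₁ = 0 := K.inner_right_of_mem_orthogonal hψ₀ hψ₁
  have hO (θ : ℝ) : O (angleVec ψ₀ ψ₁ θ) = angleVec ψ₀ ψ₁ (-θ) :=
    orthogonalProjectionOnto_sub_orthogonal_angleVec K hψ₀ hψ₁ θ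
  have hstep : Function.Semiconj (angleVec ψ₀ ψ₁) (· + 2 * α) Q := fun θ => by
    change _ = (2 : ℂ) • (inner ℂ (angleVec ψ₀ ψ₁ α) (O (angleVec ψ₀ ψ₁ θ)) • angleVec ψ₀ ψ₁ α)
      - O (angleVec ψ₀ ψ₁ θ)
    rw [hO, two_inner_smul_angleVec_sub_angleVec h01 h0 h1]
    congr 1
    ring
  calc Q^[k] (angleVec ψ₀ ψ₁ a) = angleVec ψ₀ ψ₁ ((· + 2 * α)^[k] a) :=
        (hstep.iterate_right k a).symm
    _ = angleVec ψ₀ ψ₁ (a + 2 * k * α) := by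
        rw [add_right_iterate_apply, nsmul_eq_mul]
        congr 1
        ring

theorem stmt_15 {H : Type*} [NormedAddCommGroup H] [InnerProductSpace ℂ H]
    [FiniteDimensional ℂ H]
    (K : Submodule ℂ H) (ψ₀ ψ₁ : H)
    (hψ₀ : ψ₀ ∈ K) (hψ₁ : ψ₁ ∈ Kᗮ) (h0 : ‖ψ₀‖ = 1) (h1 : ‖ψ₁‖ = 1)
    (α : ℝ) (hα : α ∈ Ioo 0 (π / 2)) (a : ℝ) (k : ℕ) :
    let ψ : H := Real.cos α • ψ₀ + Real.sin α • ψ₁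
    let O : H → H := fun x =>
      ((Submodule.orthogonalProjectionOnto K x : H) - (Submodule.orthogonalProjectionOnto Kᗮ x : H))
    let S : H → H := fun x => (2 : ℂ) • ((inner ℂ ψ x : ℂ) • ψ) - x
    let Q : H → H := S ∘ O
    Q^[k] (Real.cos a • ψ₀ + Real.sin a • ψ₁)
      = Real.cos (a + 2 * k * α) • ψ₀ + Real.sin (a + 2 * k * α) • ψ₁ :=
  stmt_15_general K ψ₀ ψ₁ hψ₀ hψ₁ h0 h1 α a k
end

section
/- For α ∈ (0, π/4), sin²(α + 2·⌊π/(4α)⌋·α) ≥ cos²(2α). -/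
open Real

theorem stmt_16 (α : ℝ) (hα : α ∈ Set.Ioo 0 (π / 4)) :
    Real.sin (α + 2 * ⌊π / (4 * α)⌋ * α) ^ 2 ≥ Real.cos (2 * α) ^ 2 := by
  obtain ⟨h0, h4⟩ := hα
  have hπ := Real.pi_pos
  set k : ℤ := ⌊π / (4 * α)⌋ with hk
  have hkle : (k : ℝ) ≤ π / (4 * α) := Int.floor_le _
  have hkgt : π / (4 * α) - 1 < (k : ℝ) := by
    have := Int.lt_floor_add_one (π / (4 * α)); linarith
  have h4α : 0 < 4 * α := by linarith
  have hub : 2 * (k : ℝ) * α ≤ π / 2 := by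
    have := (div_le_iff₀ h4α).mp (le_refl (π / (4 * α)))
    nlinarith [mul_le_mul_of_nonneg_right hkle (le_of_lt h4α),
      (div_mul_cancel₀ π (ne_of_gt h4α))]
  have hlb : π / 2 - 2 * α < 2 * (k : ℝ) * α := by
    nlinarith [mul_lt_mul_of_pos_right hkgt h4α,
      (div_mul_cancel₀ π (ne_of_gt h4α))]
  set θ : ℝ := α + 2 * (k : ℝ) * α with hθ
  have habs : |θ - π / 2| ≤ α := by
    rw [abs_le]; constructor <;> [linarith; linarith]
  have hsin : Real.sin θ = Real.cos (θ - π / 2) := by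
    rw [Real.cos_sub]; simp
  have hc : Real.cos α ≤ Real.cos (θ - π / 2) := by
    rw [← Real.cos_abs (θ - π / 2)]
    apply Real.cos_le_cos_of_nonneg_of_le_pi (abs_nonneg _) _ habs
    linarith [Real.pi_gt_three]
  have hc2 : Real.cos (2 * α) ≤ Real.cos α := by
    apply Real.cos_le_cos_of_nonneg_of_le_pi (le_of_lt h0) _ (by linarith)
    linarith [Real.pi_gt_three]
  have hc2pos : 0 ≤ Real.cos (2 * α) := by
    apply Real.cos_nonneg_of_mem_Icc
    constructor <;> [linarith; linarith]
  have : Real.cos (2 * α) ≤ Real.sin θ := by rw [hsin]; linarith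
  calc Real.cos (2 * α) ^ 2 ≤ Real.sin θ ^ 2 := by nlinarith
    _ = Real.sin (α + 2 * k * α) ^ 2 := by norm_num [hθ]
end

section
/- Let κ ∈ (0,1) and a ∈ ℝ with cos²(a) + (1−κ)sin²(a) > 0. With notation as in the weak-measurement setup, the component of E_κ((cos(a)ψ₀ + sin(a)ψ₁) ⊗ |⊥⟩) along probe state |⊥⟩ has squared norm p_⊥ = 1 − κ·sin²(a), and after normalization equals (1/√p_⊥)·(cos(a)ψ₀ + √(1−κ)·sin(a)ψ₁) ⊗ |⊥⟩. -/
open Real Set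

/-! Since `ψ₀, ψ₁` are orthonormal, `P₀` and `P₁` just read off the coordinates of
`cos a • ψ₀ + sin a • ψ₁`, so the `⊥`-component is `cos a • ψ₀ + (√(1 - κ) * sin a) • ψ₁`;
by Pythagoras its squared norm is `cos² a + (1 - κ) sin² a = 1 - κ sin² a`. -/

section OrthonormalPair

variable {H : Type*} [NormedAddCommGroup H] [InnerProductSpace ℂ H] {ψ₀ ψ₁ : H}

theorem inner_fst_real_smul_add_real_smul (h0 : ‖ψ₀‖ = 1) (horth : inner ℂ ψ₀ ψ₁ = 0)
    (c s : ℝ) : inner ℂ ψ₀ (c • ψ₀ + s • ψ₁) = c := by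
  simp [← Complex.coe_smul, h0, horth]

theorem inner_snd_real_smul_add_real_smul (h1 : ‖ψ₁‖ = 1) (horth : inner ℂ ψ₀ ψ₁ = 0)
    (c s : ℝ) : inner ℂ ψ₁ (c • ψ₀ + s • ψ₁) = s := by
  have horth' : inner ℂ ψ₁ ψ₀ = 0 := inner_eq_zero_symm.mp horth
  simp [← Complex.coe_smul, h1, horth']

theorem norm_real_smul_add_real_smul_sq (h0 : ‖ψ₀‖ = 1) (h1 : ‖ψ₁‖ = 1)
    (horth : inner ℂ ψ₀ ψ₁ = 0) (c s : ℝ) : ‖c • ψ₀ + s • ψ₁‖ ^ 2 = c ^ 2 + s ^ 2 := by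
  have hcs : inner ℂ (c • ψ₀) (s • ψ₁) = 0 := by
    simp [← Complex.coe_smul, horth]
  rw [sq, norm_add_sq_eq_norm_sq_add_norm_sq_of_inner_eq_zero _ _ hcs, norm_smul, norm_smul, h0, h1]
  simp [sq]

end OrthonormalPair

/-- The space `H ⊗ ℂ²` is modelled as pairs `(x, y) : H × H`, representing
`x ⊗ |⊥⟩ + y ⊗ |⊤⟩`. The entangler `E_κ = P₀ ⊗ I + P₁ ⊗ R_κ`, where
`R_κ |⊥⟩ = √(1-κ)|⊥⟩ + √κ|⊤⟩` and `R_κ |⊤⟩ = √κ|⊥⟩ - √(1-κ)|⊤⟩`, and `Pᵢ` is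
the orthogonal projection onto `span{ψᵢ}`. -/
theorem stmt_18_general {H : Type*} [NormedAddCommGroup H] [InnerProductSpace ℂ H]
    (ψ₀ ψ₁ : H) (h0 : ‖ψ₀‖ = 1) (h1 : ‖ψ₁‖ = 1) (horth : (inner ℂ ψ₀ ψ₁ : ℂ) = 0)
    (κ : ℝ) (hκ : κ ∈ Ioo (0:ℝ) 1) (a : ℝ) :
    let P₀ : H → H := fun x => (inner ℂ ψ₀ x : ℂ) • ψ₀
    let P₁ : H → H := fun x => (inner ℂ ψ₁ x : ℂ) • ψ₁
    let E : H × H → H × H := fun p =>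
      (P₀ p.1 + Real.sqrt (1 - κ) • P₁ p.1 + Real.sqrt κ • P₁ p.2,
       Real.sqrt κ • P₁ p.1 - Real.sqrt (1 - κ) • P₁ p.2 + P₀ p.2)
    let bot : H := (E (Real.cos a • ψ₀ + Real.sin a • ψ₁, 0)).1
    ‖bot‖ ^ 2 = 1 - κ * Real.sin a ^ 2 ∧
      ‖bot‖⁻¹ • bot = (Real.sqrt (1 - κ * Real.sin a ^ 2))⁻¹ •
        (Real.cos a • ψ₀ + (Real.sqrt (1 - κ) * Real.sin a) • ψ₁) := by
  intro P₀ P₁ E bot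
  have hbot : bot = cos a • ψ₀ + (√(1 - κ) * sin a) • ψ₁ := by
    simp only [bot, E, P₀, P₁, inner_fst_real_smul_add_real_smul h0 horth,
      inner_snd_real_smul_add_real_smul h1 horth, inner_zero_right, zero_smul, smul_zero,
      add_zero, Complex.coe_smul, smul_smul]
  have hnorm : ‖bot‖ ^ 2 = 1 - κ * sin a ^ 2 := by
    rw [hbot, norm_real_smul_add_real_smul_sq h0 h1 horth, mul_pow, sq_sqrt (by linarith [hκ.2])]
    linarith [sin_sq_add_cos_sq a]
  refine ⟨hnorm, ?_⟩
  rw [← hnorm, sqrt_sq (norm_nonneg _), hbot]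

/-- Weak measurement, outcome ⊥ (Proposition 1 of the paper).
The space `H ⊗ ℂ²` is modelled as pairs `(x, y) : H × H`, representing
`x ⊗ |⊥⟩ + y ⊗ |⊤⟩`. The entangler `E_κ = P₀ ⊗ I + P₁ ⊗ R_κ`, where
`R_κ |⊥⟩ = √(1-κ)|⊥⟩ + √κ|⊤⟩` and `R_κ |⊤⟩ = √κ|⊥⟩ - √(1-κ)|⊤⟩`, and `Pᵢ` is
the orthogonal projection onto `span{ψᵢ}`. -/
theorem stmt_18 {H : Type*} [NormedAddCommGroup H] [InnerProductSpace ℂ H]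
    (ψ₀ ψ₁ : H) (h0 : ‖ψ₀‖ = 1) (h1 : ‖ψ₁‖ = 1) (horth : (inner ℂ ψ₀ ψ₁ : ℂ) = 0)
    (κ : ℝ) (hκ : κ ∈ Ioo (0:ℝ) 1) (a : ℝ)
    (hpos : Real.cos a ^ 2 + (1 - κ) * Real.sin a ^ 2 > 0) :
    let P₀ : H → H := fun x => (inner ℂ ψ₀ x : ℂ) • ψ₀
    let P₁ : H → H := fun x => (inner ℂ ψ₁ x : ℂ) • ψ₁
    let E : H × H → H × H := fun p =>
      (P₀ p.1 + Real.sqrt (1 - κ) • P₁ p.1 + Real.sqrt κ • P₁ p.2,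
       Real.sqrt κ • P₁ p.1 - Real.sqrt (1 - κ) • P₁ p.2 + P₀ p.2)
    let bot : H := (E (Real.cos a • ψ₀ + Real.sin a • ψ₁, 0)).1
    ‖bot‖ ^ 2 = 1 - κ * Real.sin a ^ 2 ∧
      ‖bot‖⁻¹ • bot = (Real.sqrt (1 - κ * Real.sin a ^ 2))⁻¹ •
        (Real.cos a • ψ₀ + (Real.sqrt (1 - κ) * Real.sin a) • ψ₁) :=
  stmt_18_general ψ₀ ψ₁ h0 h1 horth κ hκ a
end
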